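/- Assume q_n ≥ c > 0 for all n ∈ ℤ₀. Then problem (P) has two linearly independent solutions ψ = (ψ_n)_{n∈ℤ} and χ = (χ_n)_{n∈ℤ} such that ∑_{n=0}^{∞} |ψ_n|² < ∞ and ∑_{n=−∞}^{0} |χ_n|² < ∞. -/

import Mathlib

/-!
On each half-line the equation is the recurrence `y (n + 1) = (2 + q n) * y n - y (n - 1)`, and
`2 + q n ≥ r + r⁻¹` for `r = (1 + c)⁻¹ < 1`. The ratios `t n = y (n + 1) / y n` of a positive
solution satisfy `t (n - 1) = (2 + q n - t n)⁻¹`; this map is monotone on `[0, r]^ℕ`, so by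
Knaster–Tarski it has a fixed point, and the partial products of the ratios give a positive solution
bounded by `r ^ n`. Extending the decaying solutions of the two half-lines through the impulse
conditions gives `ψ` and `χ`. Their Casoratian at `(-1, 0)` vanishes only if `e^{2iδ}` is a negative
real, which `0 ≤ 2δ < π` excludes.
-/

open Finset Complex

/- Problem (P): −Δ²y_{n−1} + q_n y_n = 0 on ℤ₀ = ℤ \ {0,1}, with impulse conditions
   y_{−1} = y₁, Δy_{−1} = e^{2iδ} Δy₁, for a sequence y : ℤ → ℂ. -/
def IsSolP (δ : ℝ) (q : ℤ → ℝ) (y : ℤ → ℂ) : Prop :=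
  (∀ n : ℤ, n ≠ 0 → n ≠ 1 →
    -(y (n + 1) - 2 * y n + y (n - 1)) + (q n : ℂ) * y n = 0) ∧
  y (-1) = y 1 ∧
  y 0 - y (-1) = Complex.exp (2 * (δ : ℂ) * Complex.I) * (y 2 - y 1)

theorem inv_sub_mem_Icc {r b x : ℝ} (hr : 0 < r) (hb : r + r⁻¹ ≤ b) (hx : x ∈ Set.Icc 0 r) :
    (b - x)⁻¹ ∈ Set.Icc 0 r := by
  have hbx : r⁻¹ ≤ b - x := by linarith [hx.2]
  have hpos : 0 < b - x := (inv_pos.2 hr).trans_le hbx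
  exact ⟨inv_nonneg.2 hpos.le, by simpa using inv_anti₀ (inv_pos.2 hr) hbx⟩

theorem exists_ratio_sequence {r : ℝ} (hr : 0 < r) {b : ℕ → ℝ} (hb : ∀ k, r + r⁻¹ ≤ b k) :
    ∃ t : ℕ → ℝ, (∀ k, 0 < t k ∧ t k ≤ r) ∧ ∀ k, t k * (b k - t (k + 1)) = 1 := by
  have : Fact (0 ≤ r) := ⟨hr.le⟩
  let T : (ℕ → Set.Icc 0 r) →o (ℕ → Set.Icc 0 r) :=
    { toFun := fun t k => ⟨(b k - t (k + 1))⁻¹, inv_sub_mem_Icc hr (hb k) (t (k + 1)).2⟩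
      monotone' := fun s t hst k => by
        have hden : 0 < b k - t (k + 1) := by linarith [hb k, (t (k + 1)).2.2, inv_pos.2 hr]
        exact inv_anti₀ hden (sub_le_sub_left (Subtype.coe_le_coe.2 (hst (k + 1))) _) }
  set t : ℕ → ℝ := fun k => T.lfp k
  have hfix : ∀ k, t k = (b k - t (k + 1))⁻¹ := fun k =>
    (congrArg (fun t => (t k : ℝ)) T.map_lfp).symm
  have hden : ∀ k, 0 < b k - t (k + 1) := fun k => by
    linarith [hb k, (T.lfp (k + 1)).2.2, inv_pos.2 hr]
  refine ⟨t, fun k => ⟨?_, (T.lfp k).2.2⟩, fun k => ?_⟩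
  · rw [hfix k]; exact inv_pos.2 (hden k)
  · rw [hfix k]; exact inv_mul_cancel₀ (hden k).ne'

theorem exists_pos_solution_le_geometric {r : ℝ} (hr : 0 < r) {b : ℕ → ℝ}
    (hb : ∀ k, r + r⁻¹ ≤ b k) :
    ∃ u : ℕ → ℝ, u 0 = 1 ∧ (∀ k, u (k + 2) = b k * u (k + 1) - u k) ∧
      ∀ k, 0 < u k ∧ u k ≤ r ^ k := by
  obtain ⟨t, ht, hrec⟩ := exists_ratio_sequence hr hb
  refine ⟨fun k => ∏ j ∈ range k, t j, by simp, fun k => ?_, fun k => ⟨?_, ?_⟩⟩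
  · simp only [prod_range_succ]
    linear_combination (-∏ j ∈ range k, t j) * hrec k
  · exact prod_pos fun j _ => (ht j).1
  · calc ∏ j ∈ range k, t j ≤ ∏ _j ∈ range k, r :=
          prod_le_prod (fun j _ => (ht j).1.le) fun j _ => (ht j).2
      _ = r ^ k := by rw [prod_const, card_range]

theorem summable_norm_sq_of_norm_le_geometric {E : Type*} [NormedAddCommGroup E] {r : ℝ}
    (hr : r < 1) {u : ℕ → E} (hu : ∀ k, ‖u k‖ ≤ r ^ k) : Summable fun k => ‖u k‖ ^ 2 := by
  have hr₀ : 0 ≤ r := (norm_nonneg _).trans (by simpa using hu 1)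
  refine Summable.of_nonneg_of_le (fun _ => by positivity) (fun k => ?_)
    (summable_geometric_of_lt_one (sq_nonneg r) (by nlinarith))
  calc ‖u k‖ ^ 2 ≤ (r ^ k) ^ 2 := pow_le_pow_left₀ (norm_nonneg _) (hu k) 2
    _ = (r ^ 2) ^ k := by ring

theorem linearIndependent_pair_of_mul_sub_mul_ne_zero {α K : Type*} [Field K] {f g : α → K}
    {x y : α} (h : f x * g y - f y * g x ≠ 0) : LinearIndependent K ![f, g] := by
  rw [linearIndependent_fin2]
  refine ⟨fun hg => h ?_, fun a ha => h ?_⟩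
  · simp [show g = 0 from hg]
  · simp only [Matrix.cons_val_one, Matrix.cons_val_zero] at ha
    simp only [← ha, Pi.smul_apply, smul_eq_mul]
    ring

theorem exp_mul_I_mul_ne {θ x y : ℝ} (hθ : θ ∈ Set.Ico 0 Real.pi) (hx : x < 0) (hy : 0 < y) :
    exp (θ * I) * x ≠ y := by
  intro h
  have hre := congrArg re h
  have him := congrArg im h
  simp only [exp_ofReal_mul_I_re, exp_ofReal_mul_I_im, mul_re, mul_im, ofReal_re, ofReal_im]
    at hre him
  have hsin : Real.sin θ = 0 := by simpa [hx.ne] using him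
  have hθ0 : θ = 0 :=
    (Real.sin_eq_zero_iff_of_lt_of_lt (by linarith [hθ.1, Real.pi_pos]) hθ.2).1 hsin
  simp only [hθ0, Real.cos_zero, Real.sin_zero, one_mul, zero_mul, sub_zero] at hre
  linarith

noncomputable def threeTermRec (a : ℕ → ℂ) (y₀ y₁ : ℂ) : ℕ → ℂ
  | 0 => y₀
  | 1 => y₁
  | k + 2 => a k * threeTermRec a y₀ y₁ (k + 1) - threeTermRec a y₀ y₁ k

def joinHalfLines (f g : ℕ → ℂ) (n : ℤ) : ℂ :=
  if 1 ≤ n then f (n - 1).toNat else g (-n).toNat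

section joinHalfLines

variable {f g : ℕ → ℂ} {n : ℤ} {k : ℕ}

theorem joinHalfLines_of_eq_add_one (h : n = k + 1) : joinHalfLines f g n = f k := by
  simp [joinHalfLines, show 1 ≤ n by omega, show (n - 1).toNat = k by omega]

theorem joinHalfLines_of_eq_neg (h : n = -k) : joinHalfLines f g n = g k := by
  simp [joinHalfLines, show ¬1 ≤ n by omega, show (-n).toNat = k by omega]

theorem isSolP_joinHalfLines {δ : ℝ} {q : ℤ → ℝ}
    (hf : ∀ k : ℕ, f (k + 2) = (2 + q (k + 2)) * f (k + 1) - f k)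
    (hg : ∀ k : ℕ, g (k + 2) = (2 + q (-k - 1)) * g (k + 1) - g k)
    (h₁ : g 1 = f 0) (h₀ : g 0 - g 1 = exp (2 * δ * I) * (f 1 - f 0)) :
    IsSolP δ q (joinHalfLines f g) := by
  refine ⟨fun n hn₀ hn₁ => ?_, ?_, ?_⟩
  · rcases le_or_gt 2 n with hn | hn
    · obtain ⟨k, rfl⟩ : ∃ k : ℕ, n = k + 2 := ⟨(n - 2).toNat, by omega⟩
      have e₂ : joinHalfLines f g (k + 2 + 1) = f (k + 2) :=
        joinHalfLines_of_eq_add_one (by push_cast; ring)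
      have e₁ : joinHalfLines f g (k + 2) = f (k + 1) :=
        joinHalfLines_of_eq_add_one (by push_cast; ring)
      have e₀ : joinHalfLines f g (k + 2 - 1) = f k := joinHalfLines_of_eq_add_one (by ring)
      rw [e₀, e₁, e₂, hf]
      ring
    · obtain ⟨k, rfl⟩ : ∃ k : ℕ, n = -k - 1 := ⟨(-n - 1).toNat, by omega⟩
      have e₀ : joinHalfLines f g (-k - 1 + 1) = g k := joinHalfLines_of_eq_neg (by ring)
      have e₁ : joinHalfLines f g (-k - 1) = g (k + 1) :=
        joinHalfLines_of_eq_neg (by push_cast; ring)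
      have e₂ : joinHalfLines f g (-k - 1 - 1) = g (k + 2) :=
        joinHalfLines_of_eq_neg (by push_cast; ring)
      rw [e₀, e₁, e₂, hg]
      ring
  · rwa [joinHalfLines_of_eq_neg (k := 1) (by simp), joinHalfLines_of_eq_add_one (k := 0) (by simp)]
  · rwa [joinHalfLines_of_eq_neg (k := 0) (by simp), joinHalfLines_of_eq_neg (k := 1) (by simp),
      joinHalfLines_of_eq_add_one (k := 1) (by norm_num),
      joinHalfLines_of_eq_add_one (k := 0) (by simp)]

end joinHalfLines

noncomputable def solOfRight (δ : ℝ) (q : ℤ → ℝ) (f : ℕ → ℂ) : ℤ → ℂ :=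
  joinHalfLines f
    (threeTermRec (fun k => 2 + q (-k - 1)) (f 0 + exp (2 * δ * I) * (f 1 - f 0)) (f 0))

noncomputable def solOfLeft (δ : ℝ) (q : ℤ → ℝ) (g : ℕ → ℂ) : ℤ → ℂ :=
  joinHalfLines
    (threeTermRec (fun k => 2 + q (k + 2)) (g 1) (g 1 + (exp (2 * δ * I))⁻¹ * (g 0 - g 1))) g

section solutions

variable {δ : ℝ} {q : ℤ → ℝ}

theorem isSolP_solOfRight {f : ℕ → ℂ}
    (hf : ∀ k : ℕ, f (k + 2) = (2 + q (k + 2)) * f (k + 1) - f k) :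
    IsSolP δ q (solOfRight δ q f) :=
  isSolP_joinHalfLines hf (fun _ => rfl) rfl (add_sub_cancel_left _ _)

theorem isSolP_solOfLeft {g : ℕ → ℂ}
    (hg : ∀ k : ℕ, g (k + 2) = (2 + q (-k - 1)) * g (k + 1) - g k) :
    IsSolP δ q (solOfLeft δ q g) := by
  refine isSolP_joinHalfLines (fun _ => rfl) hg rfl ?_
  show g 0 - g 1 = _ * (g 1 + _ - g 1)
  rw [add_sub_cancel_left, ← mul_assoc, mul_inv_cancel₀ (exp_ne_zero _), one_mul]

theorem summable_solOfRight {f : ℕ → ℂ} (hf : Summable fun k => ‖f k‖ ^ 2) :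
    Summable fun n : ℕ => ‖solOfRight δ q f n‖ ^ 2 := by
  refine (summable_nat_add_iff 1).mp ?_
  have hshift : ∀ k : ℕ, solOfRight δ q f (k + 1 : ℕ) = f k := fun k =>
    joinHalfLines_of_eq_add_one (by push_cast; ring)
  simpa only [hshift] using hf

theorem solOfLeft_neg_natCast (g : ℕ → ℂ) (k : ℕ) : solOfLeft δ q g (-k) = g k :=
  joinHalfLines_of_eq_neg rfl

theorem linearIndependent_solOfRight_solOfLeft (hδ : 2 * δ ∈ Set.Ico 0 Real.pi)
    {u v : ℕ → ℝ} (hu₀ : 0 < u 0) (hu₁ : u 1 < u 0) (hv₁ : 0 < v 1) (hv₀ : v 1 < v 0) :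
    LinearIndependent ℂ ![solOfRight δ q (u ·), solOfLeft δ q (v ·)] := by
  refine linearIndependent_pair_of_mul_sub_mul_ne_zero (x := -1) (y := 0) ?_
  have hR₁ : solOfRight δ q (u ·) (-1) = u 0 := joinHalfLines_of_eq_neg (k := 1) (by simp)
  have hR₀ : solOfRight δ q (u ·) 0 = u 0 + exp (2 * δ * I) * (u 1 - u 0) :=
    joinHalfLines_of_eq_neg (k := 0) (by simp)
  have hL₁ : solOfLeft δ q (v ·) (-1) = v 1 := joinHalfLines_of_eq_neg (k := 1) (by simp)
  have hL₀ : solOfLeft δ q (v ·) 0 = v 0 := joinHalfLines_of_eq_neg (k := 0) (by simp)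
  have hne := exp_mul_I_mul_ne hδ (mul_neg_of_neg_of_pos (sub_neg.2 hu₁) hv₁)
    (mul_pos hu₀ (sub_pos.2 hv₀))
  push_cast at hne
  rw [hR₁, hR₀, hL₁, hL₀]
  intro h
  exact hne (by linear_combination -h)

end solutions

/-- if q_n ≥ c > 0 on ℤ₀, problem (P) has two linearly independent
solutions ψ and χ with ∑_{n=0}^{∞} |ψ_n|² < ∞ and ∑_{n=−∞}^{0} |χ_n|² < ∞. -/
theorem special_solutions_exist (δ : ℝ) (hδ : 0 ≤ δ ∧ δ < Real.pi / 2)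
    (q : ℤ → ℝ) (c : ℝ) (hc : 0 < c) (hq : ∀ n : ℤ, n ≠ 0 → n ≠ 1 → c ≤ q n) :
    ∃ ψ χ : ℤ → ℂ, IsSolP δ q ψ ∧ IsSolP δ q χ ∧
      LinearIndependent ℂ ![ψ, χ] ∧
      Summable (fun n : ℕ => ‖ψ (n : ℤ)‖ ^ 2) ∧
      Summable (fun n : ℕ => ‖χ (-(n : ℤ))‖ ^ 2) := by
  set r : ℝ := (1 + c)⁻¹
  have hr₀ : 0 < r := by positivity
  have hr₁ : r < 1 := inv_lt_one_of_one_lt₀ (by linarith)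
  have hb : ∀ n : ℤ, n ≠ 0 → n ≠ 1 → r + r⁻¹ ≤ 2 + q n := fun n hn₀ hn₁ => by
    linarith [hq n hn₀ hn₁, inv_inv (1 + c)]
  obtain ⟨u, hu₀, hu, hu_bd⟩ := exists_pos_solution_le_geometric hr₀
    (b := fun k => 2 + q (k + 2)) fun k => hb _ (by omega) (by omega)
  obtain ⟨v, hv₀, hv, hv_bd⟩ := exists_pos_solution_le_geometric hr₀
    (b := fun k => 2 + q (-k - 1)) fun k => hb _ (by omega) (by omega)
  have hu_sq : Summable fun k => ‖(u k : ℂ)‖ ^ 2 :=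
    summable_norm_sq_of_norm_le_geometric hr₁ fun k => by
      simpa [abs_of_pos (hu_bd k).1] using (hu_bd k).2
  have hv_sq : Summable fun k => ‖(v k : ℂ)‖ ^ 2 :=
    summable_norm_sq_of_norm_le_geometric hr₁ fun k => by
      simpa [abs_of_pos (hv_bd k).1] using (hv_bd k).2
  refine ⟨solOfRight δ q (u ·), solOfLeft δ q (v ·),
    isSolP_solOfRight fun k => by rw [hu k]; push_cast; ring,
    isSolP_solOfLeft fun k => by rw [hv k]; push_cast; ring,
    linearIndependent_solOfRight_solOfLeft ⟨by linarith, by linarith⟩ (by linarith [hu_bd 0])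
      (by linarith [(hu_bd 1).2]) (hv_bd 1).1 (by linarith [(hv_bd 1).2]),
    summable_solOfRight hu_sq, by simpa only [solOfLeft_neg_natCast] using hv_sq⟩
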